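/- arXiv:2406.13790 — 4 statements merged into one kernel-verified Lean document; each statement's English description precedes it below -/
import Mathlib

section
/- For all integers m ≥ 0 and 0 ≤ ℓ ≤ m, the Boros-Moll coefficient satisfies the recurrence 4(m²+m)(m+1−ℓ)·d_ℓ(m+1) = 2m(8m²+8m−4ℓ²+3)·d_ℓ(m) − (16m²−1)(m+ℓ)·d_ℓ(m−1), where for m = ℓ = 0 the term with d_ℓ(m−1) has coefficient interpreted via the vanishing prefactor (equivalently, the identity holds for all m ≥ 1 and 0 ≤ ℓ ≤ m). -/
/-! Zeilberger's algorithm applied to the summand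
`t(m, k) = 2^k C(2m-2k, m-k) C(m+k, k) C(k, ℓ)` produces a rational certificate `R(n, k)` with
`A₀ t(n, k) - A₁ t(n+1, k) + A₂ t(n+2, k) = R(n, k+1) - R(n, k)`, where `A₀, A₁, A₂` are the
coefficients of the recurrence. Checking this only needs the rational ratios
`t(m+1, k) / t(m, k)` and `t(m, k+1) / t(m, k)`. Summing over `ℓ ≤ k ≤ n` telescopes to
`R(n, n+1)`, since `R(n, ℓ) = 0`, and `R(n, n+1)` is exactly the contribution of the terms
`k = n+1, n+2` that the sums for `n+1` and `n+2` have beyond `k = n`. -/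

/-- The Boros-Moll coefficient `d_ℓ(m)` as a rational number. -/
def bmQ (l m : ℕ) : ℚ :=
  (1 / (2:ℚ) ^ (2 * m)) *
    ∑ k ∈ Finset.Icc l m,
      (2:ℚ) ^ k * (Nat.choose (2 * m - 2 * k) (m - k)) *
        (Nat.choose (m + k) k) * (Nat.choose k l)

namespace BorosMoll

def term (l m k : ℕ) : ℚ :=
  (2:ℚ) ^ k * (Nat.choose (2 * m - 2 * k) (m - k)) * (Nat.choose (m + k) k) * (Nat.choose k l)

def bmSum (l m : ℕ) : ℚ := ∑ k ∈ Finset.Icc l m, term l m k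

theorem bmQ_eq (l m : ℕ) : bmQ l m = bmSum l m / 4 ^ m := by
  rw [bmQ, pow_mul, one_div, inv_mul_eq_div]
  norm_num [bmSum, term]

theorem cast_succ_mul_choose_central_succ (j : ℕ) :
    ((j:ℚ) + 1) * ((2 * j + 2).choose (j + 1) : ℕ)
      = 2 * (2 * j + 1) * ((2 * j).choose j : ℕ) := by
  exact_mod_cast Nat.succ_mul_centralBinom_succ j

theorem cast_succ_choose_mul_sub {n k : ℕ} (hk : k ≤ n + 1) :
    ((n + 1).choose k : ℚ) * ((n:ℚ) + 1 - k) = (n.choose k : ℚ) * (n + 1) := by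
  have := Nat.choose_mul_succ_eq n k
  rw [← Nat.cast_inj (R := ℚ)] at this
  push_cast [Nat.cast_sub hk] at this
  linarith

theorem term_succ_left (l : ℕ) {m k : ℕ} (hk : k ≤ m) :
    ((m:ℚ) + 1 - k) * (m + 1) * term l (m + 1) k
      = 2 * (2 * m - 2 * k + 1) * (m + k + 1) * term l m k := by
  obtain ⟨j, rfl⟩ := Nat.exists_eq_add_of_le hk
  have hp := cast_succ_choose_mul_sub (n := k + j + k) (k := k) (by omega)
  simp only [term, show 2 * (k + j + 1) - 2 * k = 2 * j + 2 by omega,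
    show k + j + 1 - k = j + 1 by omega, show 2 * (k + j) - 2 * k = 2 * j by omega,
    show k + j - k = j by omega, show k + j + 1 + k = k + j + k + 1 by omega]
  push_cast at hp ⊢
  linear_combination (2:ℚ) ^ k * ((k.choose l : ℕ) : ℚ) *
    (((k + j + k + 1).choose k : ℕ) * ((k:ℚ) + j + 1) * cast_succ_mul_choose_central_succ j
      + 2 * (2 * j + 1) * ((2 * j).choose j : ℕ) * hp)

theorem term_succ_right {l k : ℕ} (m : ℕ) (hl : l ≤ k + 1) (hk : k < m) :
    (2 * (m:ℚ) - 2 * k - 1) * (k + 1 - l) * term l m (k + 1)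
      = (m - k) * (m + k + 1) * term l m k := by
  obtain ⟨j, rfl⟩ := Nat.exists_eq_add_of_lt hk
  have hp : ((k + j + 1 + k + 1 : ℕ) : ℚ) * ((k + j + 1 + k).choose k : ℕ)
      = ((k + j + 1 + k + 1).choose (k + 1) : ℕ) * ((k:ℚ) + 1) := by
    exact_mod_cast Nat.add_one_mul_choose_eq (k + j + 1 + k) k
  have hl' := cast_succ_choose_mul_sub hl
  simp only [term, show 2 * (k + j + 1) - 2 * (k + 1) = 2 * j by omega,
    show k + j + 1 - (k + 1) = j by omega, show 2 * (k + j + 1) - 2 * k = 2 * j + 2 by omega,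
    show k + j + 1 - k = j + 1 by omega, show k + j + 1 + (k + 1) = k + j + 1 + k + 1 by omega]
  push_cast at hp ⊢
  linear_combination (2:ℚ) ^ (k + 1) * (2 * j + 1) * ((2 * j).choose j : ℕ) *
      ((((k + j + 1 + k + 1).choose (k + 1) : ℕ) : ℚ) * hl' - ((k.choose l : ℕ) : ℚ) * hp)
    - (2:ℚ) ^ k * ((k:ℚ) + j + 1 + k + 1) * ((k + j + 1 + k).choose k : ℕ)
      * ((k.choose l : ℕ) : ℚ) * cast_succ_mul_choose_central_succ j

/- Zeilberger's certificate for the summand. It is written through `term l (n + 2) k` so that it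
stays correct at `k = n + 1`, where the truncated subtractions make `term l n (n + 1)` junk. -/
def certificate (l n k : ℕ) : ℚ :=
  2 * ((k:ℚ) - l) * (n + 1) * (n + 2)
    * (2 * (n + 2 - l) * k ^ 2 - (4 * n ^ 2 + 10 * n + 7 - 2 * l) * k
      + 2 * (n + 1) * (n + 2) * (n + 1 + l))
    * term l (n + 2) k / ((n + k + 1) * (n + k + 2) * (2 * n - 2 * k + 3))

theorem recurrence_term_eq_certificate_sub {l n k : ℕ} (hl : l ≤ k) (hk : k ≤ n) :
    4 * (4 * (n:ℚ) + 3) * (4 * n + 5) * (n + 1 + l) * term l n k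
      - 2 * ((n:ℚ) + 1) * (8 * (n + 1) ^ 2 + 8 * (n + 1) - 4 * l ^ 2 + 3) * term l (n + 1) k
      + ((n:ℚ) + 1) * (n + 2) * (n + 2 - l) * term l (n + 2) k
      = certificate l n (k + 1) - certificate l n k := by
  have hkn : (k:ℚ) ≤ n := by exact_mod_cast hk
  have hlk : (l:ℚ) ≤ k := by exact_mod_cast hl
  have e0 : term l n k = ((n:ℚ) + 1 - k) * (n + 1) * term l (n + 1) k
      / (2 * (2 * n - 2 * k + 1) * (n + k + 1)) := by
    rw [eq_div_iff (by nlinarith)]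
    linear_combination -(term_succ_left l hk)
  have e1 : term l (n + 1) k = ((n:ℚ) + 2 - k) * (n + 2) * term l (n + 2) k
      / (2 * (2 * n - 2 * k + 3) * (n + k + 2)) := by
    rw [eq_div_iff (by nlinarith)]
    have := term_succ_left l (m := n + 1) (by omega : k ≤ n + 1)
    push_cast at this
    linear_combination -this
  have e2 : term l (n + 2) (k + 1) = ((n:ℚ) + 2 - k) * (n + k + 3) * term l (n + 2) k
      / ((2 * n - 2 * k + 3) * (k + 1 - l)) := by
    rw [eq_div_iff (by nlinarith)]
    have := term_succ_right (n + 2) (by omega : l ≤ k + 1) (by omega : k < n + 2)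
    push_cast at this
    linear_combination this
  rw [certificate, certificate, e2, e0, e1]
  generalize term l (n + 2) k = X
  have : (2 * ((n:ℚ) - k) + 3) ≠ 0 := by nlinarith
  have : (2 * ((n:ℚ) - k) + 1) ≠ 0 := by nlinarith
  have : (2 * ((n:ℚ) - (k + 1)) + 3) ≠ 0 := by nlinarith
  have : (k + 1 - l : ℚ) ≠ 0 := by nlinarith
  push_cast
  field_simp
  ring

theorem certificate_self (l n : ℕ) : certificate l n l = 0 := by
  simp [certificate]

theorem certificate_succ_self {l n : ℕ} (hl : l ≤ n + 1) :
    certificate l n (n + 1)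
      = 2 * ((n:ℚ) + 1) * (8 * (n + 1) ^ 2 + 8 * (n + 1) - 4 * l ^ 2 + 3) * term l (n + 1) (n + 1)
        - ((n:ℚ) + 1) * (n + 2) * (n + 2 - l)
          * (term l (n + 2) (n + 1) + term l (n + 2) (n + 2)) := by
  have hln : (l:ℚ) ≤ n + 1 := by exact_mod_cast hl
  have e1 : term l (n + 2) (n + 1)
      = 2 * (2 * (n:ℚ) + 3) * term l (n + 1) (n + 1) / (n + 2) := by
    rw [eq_div_iff (by positivity)]
    have := term_succ_left l (le_refl (n + 1))
    push_cast at this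
    linear_combination this
  have e2 : term l (n + 2) (n + 2)
      = (2 * (n:ℚ) + 4) * term l (n + 2) (n + 1) / (n + 2 - l) := by
    rw [eq_div_iff (by linarith)]
    have := term_succ_right (n + 2) (by omega : l ≤ n + 1 + 1) (by omega : n + 1 < n + 2)
    push_cast at this
    linear_combination this
  have : (n:ℚ) + 2 - l ≠ 0 := by linarith
  rw [certificate, e2, e1]
  push_cast
  field_simp
  ring

theorem bmSum_recurrence {l n : ℕ} (hl : l ≤ n + 1) :
    ((n:ℚ) + 1) * (n + 2) * (n + 2 - l) * bmSum l (n + 2)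
      = 2 * ((n:ℚ) + 1) * (8 * (n + 1) ^ 2 + 8 * (n + 1) - 4 * l ^ 2 + 3) * bmSum l (n + 1)
        - 4 * (4 * (n:ℚ) + 3) * (4 * n + 5) * (n + 1 + l) * bmSum l n := by
  have htel := Finset.sum_Ico_sub (certificate l n) hl
  rw [Finset.Ico_add_one_right_eq_Icc, certificate_self, sub_zero, certificate_succ_self hl] at htel
  rw [← Finset.sum_congr rfl fun k hk =>
      recurrence_term_eq_certificate_sub (Finset.mem_Icc.1 hk).1 (Finset.mem_Icc.1 hk).2,
    Finset.sum_add_distrib, Finset.sum_sub_distrib, ← Finset.mul_sum, ← Finset.mul_sum,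
    ← Finset.mul_sum] at htel
  rw [bmSum, bmSum, bmSum, Finset.sum_Icc_succ_top hl, Finset.sum_Icc_succ_top (by omega),
    Finset.sum_Icc_succ_top hl]
  linear_combination htel

end BorosMoll

open BorosMoll in
theorem stmt_0 (m l : ℕ) (hm : 1 ≤ m) (hl : l ≤ m) :
    4 * ((m:ℚ)^2 + m) * ((m:ℚ) + 1 - l) * bmQ l (m+1) =
      2 * (m:ℚ) * (8*(m:ℚ)^2 + 8*m - 4*(l:ℚ)^2 + 3) * bmQ l m
        - (16*(m:ℚ)^2 - 1) * ((m:ℚ) + l) * bmQ l (m-1) := by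
  obtain ⟨n, rfl⟩ := Nat.exists_eq_add_of_le' hm
  rw [Nat.add_sub_cancel, bmQ_eq, bmQ_eq, bmQ_eq]
  have := bmSum_recurrence hl
  push_cast
  linear_combination this / (4 * 4 ^ n)
end

section
/- For integers ℓ ≥ 1 and m ≥ ℓ+1, d_{ℓ+1}(m)/d_ℓ(m) < (m(2m+1)(2ℓ+3) + √Δ₁) / (4m(ℓ²+ℓ)), where Δ₁ = 52m⁴ + (64ℓ²+56)m³ + (16ℓ⁴+36ℓ²+13)m² − 8ℓ²m − 4ℓ². -/
/-!
Since `(ℓ + 1) C(k, ℓ + 1) = (k - ℓ) C(k, ℓ)` and `k - ℓ ≤ m - ℓ` on the range of summation, with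
strict inequality at the term `k = ℓ`, one gets the classical bound
`d_{ℓ+1}(m) / d_ℓ(m) < (m - ℓ) / (ℓ + 1)`. This already lies below the rational part of the
claimed bound, because `4ℓ(m - ℓ) < (2m + 1)(2ℓ + 3)`; the square root only enlarges it.
-/

/-- The Boros-Moll coefficient `d_ℓ(m)` as a real number. -/
noncomputable def bmR (l m : ℕ) : ℝ :=
  (1 / (2:ℝ) ^ (2 * m)) *
    ∑ k ∈ Finset.Icc l m,
      (2:ℝ) ^ k * (Nat.choose (2 * m - 2 * k) (m - k)) *
        (Nat.choose (m + k) k) * (Nat.choose k l)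

open Finset

lemma bmR_succ_eq_sum_Icc (l m : ℕ) :
    bmR (l + 1) m = 1 / (2:ℝ) ^ (2 * m) * ∑ k ∈ Icc l m,
      (2:ℝ) ^ k * (Nat.choose (2 * m - 2 * k) (m - k)) *
        (Nat.choose (m + k) k) * (Nat.choose k (l + 1)) := by
  rw [bmR]
  congr 1
  refine sum_subset (Icc_subset_Icc_left l.le_succ) fun k hk hk' => ?_
  have hkl : k = l := by simp only [mem_Icc] at hk hk'; omega
  simp [hkl]

lemma cast_succ_mul_choose_succ {k l : ℕ} (h : l ≤ k) :
    ((l:ℝ) + 1) * (k.choose (l + 1) : ℝ) = ((k:ℝ) - l) * (k.choose l : ℝ) := by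
  rw [← Nat.cast_sub h, ← Nat.cast_succ, ← Nat.cast_mul, ← Nat.cast_mul, mul_comm,
    Nat.choose_succ_right_eq, mul_comm]

lemma bmR_leading_term_pos {l m : ℕ} (h : l ≤ m) :
    0 < (2:ℝ) ^ l * (Nat.choose (2 * m - 2 * l) (m - l)) * (Nat.choose (m + l) l) := by
  have h1 := Nat.choose_pos (show m - l ≤ 2 * m - 2 * l by omega)
  have h2 := Nat.choose_pos (show l ≤ m + l by omega)
  positivity

lemma bmR_pos {l m : ℕ} (h : l ≤ m) : 0 < bmR l m := by
  rw [bmR]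
  refine mul_pos (by positivity) (sum_pos' (fun k _ => by positivity) ⟨l, mem_Icc.mpr ⟨le_rfl, h⟩, ?_⟩)
  simpa using bmR_leading_term_pos h

lemma succ_mul_bmR_succ_lt {l m : ℕ} (hm : l + 1 ≤ m) :
    ((l:ℝ) + 1) * bmR (l + 1) m < ((m:ℝ) - l) * bmR l m := by
  rw [bmR_succ_eq_sum_Icc, bmR, mul_left_comm, mul_left_comm _ (1 / _)]
  refine mul_lt_mul_of_pos_left ?_ (by positivity)
  rw [mul_sum, mul_sum]
  refine sum_lt_sum (fun k hk => ?_) ⟨l, mem_Icc.mpr ⟨le_rfl, by omega⟩, ?_⟩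
  · have hk := mem_Icc.mp hk
    rw [mul_left_comm, cast_succ_mul_choose_succ hk.1, mul_left_comm ((m:ℝ) - l)]
    gcongr
    exact_mod_cast hk.2
  · have hml : (0:ℝ) < m - l := by rw [sub_pos]; exact_mod_cast hm
    simpa using mul_pos hml (bmR_leading_term_pos (by omega : l ≤ m))

lemma bmR_succ_div_lt {l m : ℕ} (hm : l + 1 ≤ m) :
    bmR (l + 1) m / bmR l m < ((m:ℝ) - l) / (l + 1) := by
  rw [div_lt_div_iff₀ (bmR_pos (by omega)) (by positivity), mul_comm]
  exact succ_mul_bmR_succ_lt hm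

theorem stmt_10 (l m : ℕ) (hl : 1 ≤ l) (hm : l + 1 ≤ m) :
    bmR (l+1) m / bmR l m <
      ((m:ℝ) * (2*(m:ℝ)+1) * (2*(l:ℝ)+3) +
          Real.sqrt (52*(m:ℝ)^4 + (64*(l:ℝ)^2+56)*(m:ℝ)^3 +
            (16*(l:ℝ)^4+36*(l:ℝ)^2+13)*(m:ℝ)^2 - 8*(l:ℝ)^2*(m:ℝ) - 4*(l:ℝ)^2)) /
        (4*(m:ℝ)*((l:ℝ)^2+(l:ℝ))) := by
  have hl' : (1:ℝ) ≤ l := by exact_mod_cast hl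
  have hm' : (l:ℝ) + 1 ≤ m := by exact_mod_cast hm
  have hden : 0 < 4 * (m:ℝ) * ((l:ℝ) ^ 2 + l) := by
    have : (0:ℝ) < m := by linarith
    positivity
  calc bmR (l + 1) m / bmR l m < ((m:ℝ) - l) / (l + 1) := bmR_succ_div_lt hm
    _ ≤ (m:ℝ) * (2 * m + 1) * (2 * l + 3) / (4 * m * ((l:ℝ) ^ 2 + l)) := by
      rw [div_le_div_iff₀ (by positivity) hden]
      nlinarith [mul_pos (by linarith : (0:ℝ) < m) (by linarith : (0:ℝ) < l)]
    _ ≤ _ := by gcongr; exact le_add_of_nonneg_right (Real.sqrt_nonneg _)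
end

section
/- For all integers m ≥ 2 and 1 ≤ ℓ ≤ m−1, G₁ + G₂·√Δ₂ > 0, where G₁ = (m²+m)(12m²+24m−16ℓ⁴+28ℓ²+3), G₂ = 8m³+8m²−4ℓ²m+3m, and Δ₂ = 52m⁴+(64ℓ²+264)m³+(16ℓ⁴+228ℓ²+493)m²+(32ℓ⁴+256ℓ²+402)m+16ℓ⁴+88ℓ²+121. -/
/-!
`Δ₂ - (4ℓ²(m+1) + 2m²)²` has nonnegative coefficients, so `√Δ₂ ≥ 4ℓ²(m+1) + 2m²`, and `G₂ ≥ 0`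
because `ℓ² ≤ (m-1)²`. After substituting this lower bound for `√Δ₂`, the negative terms left
are `-32ℓ⁴m(m+1) - 8ℓ²m³`, and `ℓ² ≤ (m-1)²` lets the term `32ℓ²m²(m+1)²` of `G₂ · 4ℓ²(m+1)` absorb them;
what remains has positive coefficients.
-/

namespace Stmt17

variable (m l : ℝ)

def G₁ : ℝ := (m^2+m) * (12*m^2+24*m-16*l^4+28*l^2+3)

def G₂ : ℝ := 8*m^3+8*m^2-4*l^2*m+3*m

def Δ₂ : ℝ := 52*m^4 + (64*l^2+264)*m^3 + (16*l^4+228*l^2+493)*m^2 +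
  (32*l^4+256*l^2+402)*m + 16*l^4+88*l^2+121

variable {m l}

theorem sq_le_Δ₂ (hm : 0 ≤ m) : (4*l^2*(m+1) + 2*m^2)^2 ≤ Δ₂ m l := by
  have h : Δ₂ m l = (4*l^2*(m+1) + 2*m^2)^2 +
      (48*m^4 + (48*l^2+264)*m^3 + (212*l^2+493)*m^2 + (256*l^2+402)*m + 88*l^2+121) := by
    unfold Δ₂; ring
  rw [h]
  exact le_add_of_nonneg_right (by positivity)

theorem le_sqrt_Δ₂ (hm : 0 ≤ m) : 4*l^2*(m+1) + 2*m^2 ≤ √(Δ₂ m l) :=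
  Real.le_sqrt_of_sq_le (sq_le_Δ₂ hm)

theorem G₂_nonneg (hm : 1 ≤ m) (hlm : l^2 ≤ (m-1)^2) : 0 ≤ G₂ m l := by
  unfold G₂; nlinarith

theorem G₁_add_G₂_mul_pos (hm : 0 < m) (hlm : l^2 ≤ (m-1)^2) :
    0 < G₁ m l + G₂ m l * (4*l^2*(m+1) + 2*m^2) := by
  have h : G₁ m l + G₂ m l * (4*l^2*(m+1) + 2*m^2) =
      m * (32*(m+1)*l^2*((m-1)^2-l^2) + 8*l^2*(11*m^2+13*m+1) +
        (m+1)*(12*m^2+24*m+3) + 2*m^2*(8*m^2+8*m+3)) := by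
    unfold G₁ G₂; ring
  have hgap : 0 ≤ (m-1)^2 - l^2 := sub_nonneg.2 hlm
  rw [h]
  positivity

end Stmt17

open Stmt17 in
theorem stmt_17_general (m l : ℕ) (hm : 2 ≤ m) (hlm : l ≤ m - 1) :
    0 < ((m:ℝ)^2+(m:ℝ)) * (12*(m:ℝ)^2+24*(m:ℝ)-16*(l:ℝ)^4+28*(l:ℝ)^2+3) +
      (8*(m:ℝ)^3+8*(m:ℝ)^2-4*(l:ℝ)^2*(m:ℝ)+3*(m:ℝ)) *
        Real.sqrt (52*(m:ℝ)^4 + (64*(l:ℝ)^2+264)*(m:ℝ)^3 +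
          (16*(l:ℝ)^4+228*(l:ℝ)^2+493)*(m:ℝ)^2 +
          (32*(l:ℝ)^4+256*(l:ℝ)^2+402)*(m:ℝ) + 16*(l:ℝ)^4+88*(l:ℝ)^2+121) := by
  have hm₁ : (1:ℝ) ≤ m := by exact_mod_cast (by omega : 1 ≤ m)
  have hlm' : (l:ℝ) ≤ m - 1 := by
    rw [le_sub_iff_add_le]; exact_mod_cast (by omega : l + 1 ≤ m)
  have hsq : (l:ℝ)^2 ≤ ((m:ℝ)-1)^2 := pow_le_pow_left₀ (Nat.cast_nonneg l) hlm' 2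
  show 0 < G₁ m l + G₂ m l * √(Δ₂ m l)
  calc 0 < G₁ m l + G₂ m l * (4*(l:ℝ)^2*(m+1) + 2*(m:ℝ)^2) :=
        G₁_add_G₂_mul_pos (by linarith) hsq
    _ ≤ G₁ m l + G₂ m l * √(Δ₂ m l) := by
        gcongr
        · exact G₂_nonneg hm₁ hsq
        · exact le_sqrt_Δ₂ (by linarith)

theorem stmt_17 (m l : ℕ) (hm : 2 ≤ m) (hl : 1 ≤ l) (hlm : l ≤ m - 1) :
    0 < ((m:ℝ)^2+(m:ℝ)) * (12*(m:ℝ)^2+24*(m:ℝ)-16*(l:ℝ)^4+28*(l:ℝ)^2+3) +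
      (8*(m:ℝ)^3+8*(m:ℝ)^2-4*(l:ℝ)^2*(m:ℝ)+3*(m:ℝ)) *
        Real.sqrt (52*(m:ℝ)^4 + (64*(l:ℝ)^2+264)*(m:ℝ)^3 +
          (16*(l:ℝ)^4+228*(l:ℝ)^2+493)*(m:ℝ)^2 +
          (32*(l:ℝ)^4+256*(l:ℝ)^2+402)*(m:ℝ) + 16*(l:ℝ)^4+88*(l:ℝ)^2+121) :=
  stmt_17_general m l hm hlm
end

section
/- For every integer m ≥ 1, d_{m+1}(m+1)/d_m(m+1) = 2/(2m+3) and this ratio exceeds W(m, m+1) = (4m³+16m²+21m+9−√ω)/(4m(m+1)²), where ω = 16m⁶+96m⁵+296m⁴+520m³+581m²+402m+121; equivalently (2m+3)²·ω − (8m⁴+36m³+74m²+73m+27)² = 4(4m+3)(4m+5)(m²+6m+6) > 0. -/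
theorem Nat.centralBinom_succ_eq_two_mul_choose (n : ℕ) :
    (n + 1).centralBinom = 2 * (2 * n + 1).choose n := by
  rw [Nat.centralBinom_eq_two_mul_choose, show 2 * (n + 1) = 2 * n + 1 + 1 by ring,
    Nat.choose_succ_succ', Nat.choose_symm_half]
  ring

theorem bmR_self (n : ℕ) : bmR n n = n.centralBinom / 2 ^ n := by
  rw [bmR, Finset.Icc_self, Finset.sum_singleton, Nat.centralBinom_eq_two_mul_choose]
  simp only [Nat.sub_self, Nat.choose_self, ← two_mul]
  rw [pow_mul', sq]
  field_simp
  push_cast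
  ring

theorem bmR_self_pos (n : ℕ) : 0 < bmR n n := by
  rw [bmR_self]
  exact div_pos (mod_cast n.centralBinom_pos) (by positivity)

theorem two_mul_bmR_succ_sub_one (n : ℕ) :
    2 * bmR n (n + 1) = (2 * n + 3) * bmR (n + 1) (n + 1) := by
  have hIcc : Finset.Icc n (n + 1) = {n, n + 1} := by
    ext k; simp only [Finset.mem_Icc, Finset.mem_insert, Finset.mem_singleton]; omega
  rw [bmR_self, Nat.centralBinom_succ_eq_two_mul_choose, bmR, hIcc,
    Finset.sum_pair (by omega)]
  simp only [show 2 * (n + 1) - 2 * n = 2 by omega, show n + 1 - n = 1 by omega,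
    show n + 1 + n = 2 * n + 1 by ring, show n + 1 + (n + 1) = 2 * (n + 1) by ring,
    Nat.sub_self, Nat.choose_self, Nat.choose_succ_self_right,
    ← Nat.centralBinom_eq_two_mul_choose, Nat.centralBinom_succ_eq_two_mul_choose]
  field_simp
  push_cast
  ring

theorem bmR_succ_div_bmR_succ_sub_one (n : ℕ) :
    bmR (n + 1) (n + 1) / bmR n (n + 1) = 2 / (2 * n + 3) := by
  have htop := (bmR_self_pos (n + 1)).ne'
  rw [show bmR n (n + 1) = (2 * n + 3) / 2 * bmR (n + 1) (n + 1) by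
    linarith [two_mul_bmR_succ_sub_one n]]
  field_simp

theorem lt_mul_sqrt_of_sq_lt_sq_mul {a c w : ℝ} (hc : 0 ≤ c) (h : a ^ 2 < c ^ 2 * w) :
    a < c * √w := by
  rw [← Real.sqrt_sq hc, ← Real.sqrt_mul (sq_nonneg c)]
  exact Real.lt_sqrt_of_sq_lt h

theorem stmt_18 (m : ℕ) (hm : 1 ≤ m) :
    bmR (m+1) (m+1) / bmR m (m+1) = 2 / (2*(m:ℝ)+3) ∧
    2 / (2*(m:ℝ)+3) >
      (4*(m:ℝ)^3+16*(m:ℝ)^2+21*(m:ℝ)+9 -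
          Real.sqrt (16*(m:ℝ)^6+96*(m:ℝ)^5+296*(m:ℝ)^4+520*(m:ℝ)^3+
            581*(m:ℝ)^2+402*(m:ℝ)+121)) / (4*(m:ℝ)*((m:ℝ)+1)^2) ∧
    (2*(m:ℝ)+3)^2 * (16*(m:ℝ)^6+96*(m:ℝ)^5+296*(m:ℝ)^4+520*(m:ℝ)^3+
          581*(m:ℝ)^2+402*(m:ℝ)+121) -
        (8*(m:ℝ)^4+36*(m:ℝ)^3+74*(m:ℝ)^2+73*(m:ℝ)+27)^2 =
      4*(4*(m:ℝ)+3)*(4*(m:ℝ)+5)*((m:ℝ)^2+6*(m:ℝ)+6) ∧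
    0 < 4*(4*(m:ℝ)+3)*(4*(m:ℝ)+5)*((m:ℝ)^2+6*(m:ℝ)+6) := by
  have hm' : (0:ℝ) < m := by exact_mod_cast hm
  have hdisc : (2*(m:ℝ)+3)^2 * (16*(m:ℝ)^6+96*(m:ℝ)^5+296*(m:ℝ)^4+520*(m:ℝ)^3+
          581*(m:ℝ)^2+402*(m:ℝ)+121) -
        (8*(m:ℝ)^4+36*(m:ℝ)^3+74*(m:ℝ)^2+73*(m:ℝ)+27)^2 =
      4*(4*(m:ℝ)+3)*(4*(m:ℝ)+5)*((m:ℝ)^2+6*(m:ℝ)+6) := by ring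
  have hpos : 0 < 4*(4*(m:ℝ)+3)*(4*(m:ℝ)+5)*((m:ℝ)^2+6*(m:ℝ)+6) := by positivity
  refine ⟨bmR_succ_div_bmR_succ_sub_one m, ?_, hdisc, hpos⟩
  have hsqrt := lt_mul_sqrt_of_sq_lt_sq_mul (c := 2*(m:ℝ)+3) (by positivity)
    (show (8*(m:ℝ)^4+36*(m:ℝ)^3+74*(m:ℝ)^2+73*(m:ℝ)+27)^2 < (2*(m:ℝ)+3)^2 *
      (16*(m:ℝ)^6+96*(m:ℝ)^5+296*(m:ℝ)^4+520*(m:ℝ)^3+581*(m:ℝ)^2+402*(m:ℝ)+121) by linarith)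
  rw [gt_iff_lt, div_lt_div_iff₀ (by positivity) (by positivity)]
  linarith
end
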